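/- (Theorem 3.2.1: dichotomy for finite-type surfaces of the second family) Under the ruled hypothesis Q = −uP, u_y + u·u_x = 0, suppose there exist real constants λ₁, λ₂, λ₃ with Δx = λ₁·x, Δy = λ₂·y, Δf = λ₃·f on D. Then exactly one of the following holds: either (λ₁, λ₂, λ₃) = (0, 0, 0) and f is harmonic (f_xx + f_yy = 0, so the surface has zero mean curvature), or (λ₁, λ₂, λ₃) ≠ (0, 0, 0) and f is a solution of the partial differential equation f_xx + f_yy = ½((λ₂ − λ₁)xy − 2λ₃ f)·(1 + (f_x + y/2)²(1 + u²))² on D with right-hand side not identically of the trivial form, i.e. ((λ₂ − λ₁), λ₃) determining a nonzero linear combination of xy and f unless f is harmonic. -/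

import Mathlib

noncomputable section

/-- Partial derivative with respect to the first (x) variable. -/
def pdx (f : ℝ × ℝ → ℝ) : ℝ × ℝ → ℝ := fun p => fderiv ℝ f p (1, 0)

/-- Partial derivative with respect to the second (y) variable. -/
def pdy (f : ℝ × ℝ → ℝ) : ℝ × ℝ → ℝ := fun p => fderiv ℝ f p (0, 1)

/-- `P = f_x + y/2`. -/
def Pf (f : ℝ × ℝ → ℝ) : ℝ × ℝ → ℝ := fun p => pdx f p + p.2 / 2

/-- `Q = f_y - x/2`. -/
def Qf (f : ℝ × ℝ → ℝ) : ℝ × ℝ → ℝ := fun p => pdy f p - p.1 / 2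

/-- First fundamental form coefficient `E = 1 + P²`. -/
def Ef (f : ℝ × ℝ → ℝ) : ℝ × ℝ → ℝ := fun p => 1 + Pf f p ^ 2

/-- First fundamental form coefficient `F = P·Q`. -/
def Ff (f : ℝ × ℝ → ℝ) : ℝ × ℝ → ℝ := fun p => Pf f p * Qf f p

/-- First fundamental form coefficient `G = 1 + Q²`. -/
def Gf (f : ℝ × ℝ → ℝ) : ℝ × ℝ → ℝ := fun p => 1 + Qf f p ^ 2

/-- `W = √(EG − F²) = √(1 + P² + Q²)`. -/
def Wf (f : ℝ × ℝ → ℝ) : ℝ × ℝ → ℝ := fun p => Real.sqrt (1 + Pf f p ^ 2 + Qf f p ^ 2)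

/-- Second fundamental form coefficient `L = (f_xx + PQ)/W`. -/
def Lf (f : ℝ × ℝ → ℝ) : ℝ × ℝ → ℝ := fun p => (pdx (pdx f) p + Pf f p * Qf f p) / Wf f p

/-- Second fundamental form coefficient `M = (f_xy + (Q² − P²)/2)/W`. -/
def Mf (f : ℝ × ℝ → ℝ) : ℝ × ℝ → ℝ :=
  fun p => (pdx (pdy f) p + (Qf f p ^ 2 - Pf f p ^ 2) / 2) / Wf f p

/-- Second fundamental form coefficient `N = (f_yy − PQ)/W`. -/
def Nf (f : ℝ × ℝ → ℝ) : ℝ × ℝ → ℝ := fun p => (pdy (pdy f) p - Pf f p * Qf f p) / Wf f p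

/-- Mean curvature `H = (EN − 2FM + GL)/(2W²)`. -/
def Hf (f : ℝ × ℝ → ℝ) : ℝ × ℝ → ℝ :=
  fun p => (Ef f p * Nf f p - 2 * Ff f p * Mf f p + Gf f p * Lf f p) / (2 * Wf f p ^ 2)

/-- The Laplace–Beltrami operator of the graph of `f`, with the sign convention
`Δφ = −(1/W)[∂_x((G φ_x − F φ_y)/W) + ∂_y((−F φ_x + E φ_y)/W)]`. -/
def lapS (f φ : ℝ × ℝ → ℝ) : ℝ × ℝ → ℝ := fun p =>
  -(1 / Wf f p) *
    (pdx (fun q => (Gf f q * pdx φ q - Ff f q * pdy φ q) / Wf f q) p +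
     pdy (fun q => (-(Ff f q) * pdx φ q + Ef f q * pdy φ q) / Wf f q) p)

/-- Mean curvature in the form `H = (f_xx + f_yy)/(2W³)`. -/
def Hm (f : ℝ × ℝ → ℝ) : ℝ × ℝ → ℝ :=
  fun p => (pdx (pdx f) p + pdy (pdy f) p) / (2 * Wf f p ^ 3)

/-- `H₁ = (f_xx + f_yy)/W`. -/
def H1f (f : ℝ × ℝ → ℝ) : ℝ × ℝ → ℝ :=
  fun p => (pdx (pdx f) p + pdy (pdy f) p) / Wf f p

/-!
The Laplace–Beltrami operator obeys the product rule
`Δφ = φ_x Δx + φ_y Δy − (G φ_xx − 2F φ_xy + E φ_yy) / W²`, and a direct computation gives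
`W⁴ (P Δx + Q Δy) = (P² + Q²) (G f_xx − 2F f_xy + E f_yy)`. As `f_x = P − y/2` and
`f_y = Q + x/2`, the two combine to `W⁴ (Δf + (y/2) Δx − (x/2) Δy) = −(G f_xx − 2F f_xy + E f_yy)`
for every `C²` graph; the right-hand side is `−2HW³`, so this is the analogue of `Δr = −2H N`.
For a ruled graph, `(G f_xx − 2F f_xy + E f_yy) − (f_xx + f_yy) = Q² f_xx − 2PQ f_xy + P² f_yy` is
the second derivative of `f` along the ruling direction `(−Q, P) = P (u, 1)`; differentiating
`Q = −uP` and using `u_y + u u_x = 0` shows that it vanishes. The eigenvalue equations and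
`W² = 1 + P² (1 + u²)` then turn the identity into the stated PDE, and the dichotomy follows.
-/

open Filter Topology

def partialsCLM (a b : ℝ) : ℝ × ℝ →L[ℝ] ℝ :=
  a • ContinuousLinearMap.fst ℝ ℝ ℝ + b • ContinuousLinearMap.snd ℝ ℝ ℝ

@[simp]
theorem partialsCLM_apply (a b : ℝ) (v : ℝ × ℝ) : partialsCLM a b v = a * v.1 + b * v.2 := by
  simp [partialsCLM]

theorem eq_partialsCLM (L : ℝ × ℝ →L[ℝ] ℝ) : L = partialsCLM (L (1, 0)) (L (0, 1)) := by
  refine ContinuousLinearMap.ext fun v => ?_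
  have hv : v = v.1 • ((1 : ℝ), (0 : ℝ)) + v.2 • ((0 : ℝ), (1 : ℝ)) := by ext <;> simp
  conv_lhs => rw [hv]
  simp only [map_add, map_smul, smul_eq_mul, partialsCLM_apply]
  ring

def HasPartialsAt (g : ℝ × ℝ → ℝ) (gx gy : ℝ) (p : ℝ × ℝ) : Prop :=
  HasFDerivAt g (partialsCLM gx gy) p

theorem HasFDerivAt.hasPartialsAt {g : ℝ × ℝ → ℝ} {L : ℝ × ℝ →L[ℝ] ℝ} {p : ℝ × ℝ}
    (h : HasFDerivAt g L p) : HasPartialsAt g (L (1, 0)) (L (0, 1)) p := by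
  rw [HasPartialsAt, ← eq_partialsCLM]
  exact h

theorem DifferentiableAt.hasPartialsAt {g : ℝ × ℝ → ℝ} {p : ℝ × ℝ}
    (h : DifferentiableAt ℝ g p) : HasPartialsAt g (pdx g p) (pdy g p) p :=
  h.hasFDerivAt.hasPartialsAt

theorem hasPartialsAt_fst (p : ℝ × ℝ) : HasPartialsAt (fun q => q.1) 1 0 p :=
  hasFDerivAt_fst.hasPartialsAt

theorem hasPartialsAt_snd (p : ℝ × ℝ) : HasPartialsAt (fun q => q.2) 0 1 p :=
  hasFDerivAt_snd.hasPartialsAt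

theorem pdx_neg (g : ℝ × ℝ → ℝ) (p : ℝ × ℝ) : pdx (fun q => -g q) p = -pdx g p := by
  simp [pdx]

theorem pdy_neg (g : ℝ × ℝ → ℝ) (p : ℝ × ℝ) : pdy (fun q => -g q) p = -pdy g p := by
  simp [pdy]

namespace HasPartialsAt

variable {a b : ℝ × ℝ → ℝ} {p : ℝ × ℝ} {ax ay bx by' : ℝ}

theorem pdx_eq (h : HasPartialsAt a ax ay p) : pdx a p = ax := by
  simp [pdx, h.fderiv]

theorem pdy_eq (h : HasPartialsAt a ax ay p) : pdy a p = ay := by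
  simp [pdy, h.fderiv]

theorem differentiableAt (h : HasPartialsAt a ax ay p) : DifferentiableAt ℝ a p :=
  HasFDerivAt.differentiableAt h

theorem congr_partials (h : HasPartialsAt a ax ay p) {ax' ay' : ℝ} (hx : ax = ax')
    (hy : ay = ay') : HasPartialsAt a ax' ay' p :=
  hx ▸ hy ▸ h

theorem congr_of_eventuallyEq (h : HasPartialsAt a ax ay p) (he : b =ᶠ[𝓝 p] a) :
    HasPartialsAt b ax ay p :=
  HasFDerivAt.congr_of_eventuallyEq h he

theorem add (ha : HasPartialsAt a ax ay p) (hb : HasPartialsAt b bx by' p) :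
    HasPartialsAt (fun q => a q + b q) (ax + bx) (ay + by') p :=
  (HasFDerivAt.add ha hb).congr_fderiv (ContinuousLinearMap.ext fun v => by simp; ring)

theorem sub (ha : HasPartialsAt a ax ay p) (hb : HasPartialsAt b bx by' p) :
    HasPartialsAt (fun q => a q - b q) (ax - bx) (ay - by') p :=
  (HasFDerivAt.sub ha hb).congr_fderiv (ContinuousLinearMap.ext fun v => by simp; ring)

theorem neg (ha : HasPartialsAt a ax ay p) : HasPartialsAt (fun q => -a q) (-ax) (-ay) p :=
  (HasFDerivAt.neg ha).congr_fderiv (ContinuousLinearMap.ext fun v => by simp; ring)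

theorem const_add (c : ℝ) (ha : HasPartialsAt a ax ay p) :
    HasPartialsAt (fun q => c + a q) ax ay p :=
  (HasFDerivAt.const_add c ha).congr_fderiv rfl

theorem div_const (ha : HasPartialsAt a ax ay p) (c : ℝ) :
    HasPartialsAt (fun q => a q / c) (ax / c) (ay / c) p :=
  (HasFDerivAt.mul_const ha c⁻¹).congr_fderiv (ContinuousLinearMap.ext fun v => by simp; ring)

theorem mul (ha : HasPartialsAt a ax ay p) (hb : HasPartialsAt b bx by' p) :
    HasPartialsAt (fun q => a q * b q) (ax * b p + a p * bx) (ay * b p + a p * by') p :=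
  (HasFDerivAt.mul ha hb).congr_fderiv (ContinuousLinearMap.ext fun v => by simp; ring)

theorem pow_two (ha : HasPartialsAt a ax ay p) :
    HasPartialsAt (fun q => a q ^ 2) (2 * a p * ax) (2 * a p * ay) p := by
  simpa only [sq, ← two_mul, mul_comm, mul_left_comm] using
    (ha.mul ha).congr_partials (by ring) (by ring)

theorem inv (hb : HasPartialsAt b bx by' p) (hb0 : b p ≠ 0) :
    HasPartialsAt (fun q => (b q)⁻¹) (-bx / b p ^ 2) (-by' / b p ^ 2) p :=
  ((hasDerivAt_inv hb0).comp_hasFDerivAt p hb).congr_fderiv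
    (ContinuousLinearMap.ext fun v => by simp; ring)

theorem div (ha : HasPartialsAt a ax ay p) (hb : HasPartialsAt b bx by' p) (hb0 : b p ≠ 0) :
    HasPartialsAt (fun q => a q / b q) ((ax * b p - a p * bx) / b p ^ 2)
      ((ay * b p - a p * by') / b p ^ 2) p := by
  simpa only [div_eq_mul_inv] using
    (ha.mul (hb.inv hb0)).congr_partials (by field_simp; ring) (by field_simp; ring)

theorem sqrt (ha : HasPartialsAt a ax ay p) (h0 : a p ≠ 0) :
    HasPartialsAt (fun q => Real.sqrt (a q)) (ax / (2 * Real.sqrt (a p)))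
      (ay / (2 * Real.sqrt (a p))) p :=
  (HasFDerivAt.sqrt ha h0).congr_fderiv (ContinuousLinearMap.ext fun v => by simp; ring)

end HasPartialsAt

section Smooth

variable {f : ℝ × ℝ → ℝ} {p : ℝ × ℝ}

theorem ContDiffAt.differentiableAt_fderiv (hf : ContDiffAt ℝ 2 f p) :
    DifferentiableAt ℝ (fderiv ℝ f) p :=
  (hf.fderiv_right (m := 1) le_rfl).differentiableAt one_ne_zero

theorem ContDiffAt.hasPartialsAt_pdx (hf : ContDiffAt ℝ 2 f p) :
    HasPartialsAt (pdx f) (pdx (pdx f) p) (pdy (pdx f) p) p :=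
  (hf.differentiableAt_fderiv.clm_apply (differentiableAt_const _)).hasPartialsAt

theorem ContDiffAt.pdx_pdy_eq (hf : ContDiffAt ℝ 2 f p) : pdx (pdy f) p = pdy (pdx f) p := by
  have happly (v : ℝ × ℝ) :
      fderiv ℝ (fun q => fderiv ℝ f q v) p = (fderiv ℝ (fderiv ℝ f) p).flip v := by
    simpa using
      (hf.differentiableAt_fderiv.hasFDerivAt.clm_apply (hasFDerivAt_const v p)).fderiv
  change fderiv ℝ (fun q => fderiv ℝ f q (0, 1)) p (1, 0) =
    fderiv ℝ (fun q => fderiv ℝ f q (1, 0)) p (0, 1)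
  rw [happly, happly]
  exact (hf.isSymmSndFDerivAt (by simp)).eq (1, 0) (0, 1)

theorem ContDiffAt.hasPartialsAt_pdy (hf : ContDiffAt ℝ 2 f p) :
    HasPartialsAt (pdy f) (pdy (pdx f) p) (pdy (pdy f) p) p :=
  (hf.differentiableAt_fderiv.clm_apply (differentiableAt_const _)).hasPartialsAt.congr_partials
    hf.pdx_pdy_eq rfl

end Smooth

theorem Wf_pos (f : ℝ × ℝ → ℝ) (p : ℝ × ℝ) : 0 < Wf f p :=
  Real.sqrt_pos.mpr (by positivity)

theorem Wf_sq (f : ℝ × ℝ → ℝ) (p : ℝ × ℝ) : Wf f p ^ 2 = 1 + Pf f p ^ 2 + Qf f p ^ 2 :=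
  Real.sq_sqrt (by positivity)

theorem lapS_fst (f : ℝ × ℝ → ℝ) (p : ℝ × ℝ) :
    lapS f (fun q => q.1) p = -(1 / Wf f p) *
      (pdx (fun q => Gf f q / Wf f q) p - pdy (fun q => Ff f q / Wf f q) p) := by
  have hx : (fun q => (Gf f q * pdx (fun w => w.1) q - Ff f q * pdy (fun w => w.1) q) / Wf f q) =
      fun q => Gf f q / Wf f q := by
    funext q; rw [(hasPartialsAt_fst q).pdx_eq, (hasPartialsAt_fst q).pdy_eq]; ring
  have hy : (fun q => (-Ff f q * pdx (fun w => w.1) q + Ef f q * pdy (fun w => w.1) q) / Wf f q) =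
      fun q => -(Ff f q / Wf f q) := by
    funext q; rw [(hasPartialsAt_fst q).pdx_eq, (hasPartialsAt_fst q).pdy_eq]; ring
  rw [lapS, hx, hy, pdy_neg]
  ring

theorem lapS_snd (f : ℝ × ℝ → ℝ) (p : ℝ × ℝ) :
    lapS f (fun q => q.2) p = -(1 / Wf f p) *
      (pdy (fun q => Ef f q / Wf f q) p - pdx (fun q => Ff f q / Wf f q) p) := by
  have hx : (fun q => (Gf f q * pdx (fun w => w.2) q - Ff f q * pdy (fun w => w.2) q) / Wf f q) =
      fun q => -(Ff f q / Wf f q) := by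
    funext q; rw [(hasPartialsAt_snd q).pdx_eq, (hasPartialsAt_snd q).pdy_eq]; ring
  have hy : (fun q => (-Ff f q * pdx (fun w => w.2) q + Ef f q * pdy (fun w => w.2) q) / Wf f q) =
      fun q => Ef f q / Wf f q := by
    funext q; rw [(hasPartialsAt_snd q).pdx_eq, (hasPartialsAt_snd q).pdy_eq]; ring
  rw [lapS, hx, hy, pdx_neg]
  ring

section Graph

variable {f : ℝ × ℝ → ℝ} {p : ℝ × ℝ} {r s t : ℝ}

theorem lapS_eq_of_hasPartialsAt {φ : ℝ × ℝ → ℝ} {a b c d : ℝ}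
    (hG : DifferentiableAt ℝ (fun q => Gf f q / Wf f q) p)
    (hF : DifferentiableAt ℝ (fun q => Ff f q / Wf f q) p)
    (hE : DifferentiableAt ℝ (fun q => Ef f q / Wf f q) p)
    (hφx : HasPartialsAt (pdx φ) a b p) (hφy : HasPartialsAt (pdy φ) c d p) :
    lapS f φ p = pdx φ p * lapS f (fun q => q.1) p + pdy φ p * lapS f (fun q => q.2) p -
      (Gf f p * a - Ff f p * (b + c) + Ef f p * d) / Wf f p ^ 2 := by
  have hx : (fun q => (Gf f q * pdx φ q - Ff f q * pdy φ q) / Wf f q) =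
      fun q => Gf f q / Wf f q * pdx φ q - Ff f q / Wf f q * pdy φ q := by
    funext q; ring
  have hy : (fun q => (-Ff f q * pdx φ q + Ef f q * pdy φ q) / Wf f q) =
      fun q => Ef f q / Wf f q * pdy φ q - Ff f q / Wf f q * pdx φ q := by
    funext q; ring
  rw [lapS, lapS_fst, lapS_snd, hx, hy,
    ((hG.hasPartialsAt.mul hφx).sub (hF.hasPartialsAt.mul hφy)).pdx_eq,
    ((hE.hasPartialsAt.mul hφy).sub (hF.hasPartialsAt.mul hφx)).pdy_eq]
  ring

theorem hasPartialsAt_Pf (hfx : HasPartialsAt (pdx f) r s p) :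
    HasPartialsAt (Pf f) r (s + 1 / 2) p :=
  (hfx.add ((hasPartialsAt_snd p).div_const 2)).congr_partials (by ring) (by ring)

theorem hasPartialsAt_Qf (hfy : HasPartialsAt (pdy f) s t p) :
    HasPartialsAt (Qf f) (s - 1 / 2) t p :=
  (hfy.sub ((hasPartialsAt_fst p).div_const 2)).congr_partials (by ring) (by ring)

theorem hasPartialsAt_Ef (hfx : HasPartialsAt (pdx f) r s p) :
    HasPartialsAt (Ef f) (2 * Pf f p * r) (2 * Pf f p * (s + 1 / 2)) p :=
  (hasPartialsAt_Pf hfx).pow_two.const_add 1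

theorem hasPartialsAt_Gf (hfy : HasPartialsAt (pdy f) s t p) :
    HasPartialsAt (Gf f) (2 * Qf f p * (s - 1 / 2)) (2 * Qf f p * t) p :=
  (hasPartialsAt_Qf hfy).pow_two.const_add 1

theorem hasPartialsAt_Ff (hfx : HasPartialsAt (pdx f) r s p) (hfy : HasPartialsAt (pdy f) s t p) :
    HasPartialsAt (Ff f) (r * Qf f p + Pf f p * (s - 1 / 2))
      ((s + 1 / 2) * Qf f p + Pf f p * t) p :=
  (hasPartialsAt_Pf hfx).mul (hasPartialsAt_Qf hfy)

theorem hasPartialsAt_Wf (hfx : HasPartialsAt (pdx f) r s p) (hfy : HasPartialsAt (pdy f) s t p) :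
    HasPartialsAt (Wf f) ((Pf f p * r + Qf f p * (s - 1 / 2)) / Wf f p)
      ((Pf f p * (s + 1 / 2) + Qf f p * t) / Wf f p) p :=
  ((((hasPartialsAt_Pf hfx).pow_two.const_add 1).add (hasPartialsAt_Qf hfy).pow_two).sqrt
    (by positivity)).congr_partials (by simp only [Wf]; field_simp)
    (by simp only [Wf]; field_simp)

theorem Pf_mul_lapS_fst_add_Qf_mul_lapS_snd (hfx : HasPartialsAt (pdx f) r s p)
    (hfy : HasPartialsAt (pdy f) s t p) :
    Wf f p ^ 4 * (Pf f p * lapS f (fun q => q.1) p + Qf f p * lapS f (fun q => q.2) p) =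
      (Pf f p ^ 2 + Qf f p ^ 2) * (Gf f p * r - 2 * Ff f p * s + Ef f p * t) := by
  have hW := hasPartialsAt_Wf hfx hfy
  have hW0 := (Wf_pos f p).ne'
  rw [lapS_fst, lapS_snd, ((hasPartialsAt_Gf hfy).div hW hW0).pdx_eq,
    ((hasPartialsAt_Ff hfx hfy).div hW hW0).pdx_eq, ((hasPartialsAt_Ff hfx hfy).div hW hW0).pdy_eq,
    ((hasPartialsAt_Ef hfx).div hW hW0).pdy_eq]
  field_simp
  rw [Wf_sq]
  simp only [Ef, Ff, Gf]
  ring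

theorem lapS_self_add_lapS_coords (hfx : HasPartialsAt (pdx f) r s p)
    (hfy : HasPartialsAt (pdy f) s t p) :
    Wf f p ^ 4 * (lapS f f p + p.2 / 2 * lapS f (fun q => q.1) p -
      p.1 / 2 * lapS f (fun q => q.2) p) = -(Gf f p * r - 2 * Ff f p * s + Ef f p * t) := by
  have hW := hasPartialsAt_Wf hfx hfy
  have hW0 := (Wf_pos f p).ne'
  have hf := lapS_eq_of_hasPartialsAt
    ((hasPartialsAt_Gf hfy).div hW hW0).differentiableAt
    ((hasPartialsAt_Ff hfx hfy).div hW hW0).differentiableAt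
    ((hasPartialsAt_Ef hfx).div hW hW0).differentiableAt hfx hfy
  have hPQ := Pf_mul_lapS_fst_add_Qf_mul_lapS_snd hfx hfy
  have hW2 := Wf_sq f p
  have hfx' : pdx f p = Pf f p - p.2 / 2 := by simp only [Pf]; ring
  have hfy' : pdy f p = Qf f p + p.1 / 2 := by simp only [Qf]; ring
  rw [hf, hfx', hfy']
  field_simp
  linear_combination 2 * hPQ - 2 * (Gf f p * r - 2 * Ff f p * s + Ef f p * t) * hW2

theorem hessian_form_eq_of_ruled {u : ℝ × ℝ → ℝ} {ux uy : ℝ}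
    (hfx : HasPartialsAt (pdx f) r s p) (hfy : HasPartialsAt (pdy f) s t p)
    (hu : HasPartialsAt u ux uy p) (hruled : Qf f =ᶠ[𝓝 p] fun q => -u q * Pf f q)
    (hburgers : uy + u p * ux = 0) :
    Gf f p * r - 2 * Ff f p * s + Ef f p * t = r + t := by
  have hQ := (hu.neg.mul (hasPartialsAt_Pf hfx)).congr_of_eventuallyEq hruled
  have hQx : s - 1 / 2 = -ux * Pf f p + -u p * r := by
    rw [← (hasPartialsAt_Qf hfy).pdx_eq, hQ.pdx_eq]
  have hQy : t = -uy * Pf f p + -u p * (s + 1 / 2) := by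
    rw [← (hasPartialsAt_Qf hfy).pdy_eq, hQ.pdy_eq]
  have hQp : Qf f p = -u p * Pf f p := hruled.eq_of_nhds
  simp only [Ef, Ff, Gf]
  linear_combination ((Qf f p - u p * Pf f p) * r - 2 * Pf f p * s) * hQp + Pf f p ^ 2 * hQy
    + Pf f p ^ 2 * u p * hQx - Pf f p ^ 3 * hburgers

end Graph

theorem finite_type_pde {D : Set (ℝ × ℝ)} (hD : IsOpen D) {f u : ℝ × ℝ → ℝ}
    (hf : ContDiffOn ℝ 2 f D) (hu : DifferentiableOn ℝ u D)
    (hruled : ∀ p ∈ D, Qf f p = -(u p) * Pf f p)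
    (hburgers : ∀ p ∈ D, pdy u p + u p * pdx u p = 0) {l1 l2 l3 : ℝ}
    (h1 : ∀ p ∈ D, lapS f (fun q => q.1) p = l1 * p.1)
    (h2 : ∀ p ∈ D, lapS f (fun q => q.2) p = l2 * p.2)
    (h3 : ∀ p ∈ D, lapS f f p = l3 * f p) {p : ℝ × ℝ} (hp : p ∈ D) :
    pdx (pdx f) p + pdy (pdy f) p =
      (1 / 2) * ((l2 - l1) * (p.1 * p.2) - 2 * l3 * f p) *
        (1 + (pdx f p + p.2 / 2) ^ 2 * (1 + u p ^ 2)) ^ 2 := by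
  have hDp : D ∈ 𝓝 p := hD.mem_nhds hp
  have hfx := (hf.contDiffAt hDp).hasPartialsAt_pdx
  have hfy := (hf.contDiffAt hDp).hasPartialsAt_pdy
  have hmean := lapS_self_add_lapS_coords hfx hfy
  rw [hessian_form_eq_of_ruled hfx hfy ((hu.differentiableAt hDp).hasPartialsAt)
    (eventually_of_mem hDp hruled) (hburgers p hp), h1 p hp, h2 p hp, h3 p hp] at hmean
  have hW2 : Wf f p ^ 2 = 1 + (pdx f p + p.2 / 2) ^ 2 * (1 + u p ^ 2) := by
    rw [Wf_sq, hruled p hp, Pf]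
    ring
  rw [show Wf f p ^ 4 = (Wf f p ^ 2) ^ 2 by ring, hW2] at hmean
  linear_combination hmean

theorem finite_type_S2_dichotomy_general
    (D : Set (ℝ × ℝ)) (hD : IsOpen D)
    (f : ℝ × ℝ → ℝ) (hf : ContDiffOn ℝ (⊤ : ℕ∞) f D)
    (u : ℝ × ℝ → ℝ) (hu : ContDiffOn ℝ (⊤ : ℕ∞) u D)
    (hruled : ∀ p ∈ D, Qf f p = -(u p) * Pf f p)
    (hburgers : ∀ p ∈ D, pdy u p + u p * pdx u p = 0)
    (l1 l2 l3 : ℝ)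
    (h1 : ∀ p ∈ D, lapS f (fun q => q.1) p = l1 * p.1)
    (h2 : ∀ p ∈ D, lapS f (fun q => q.2) p = l2 * p.2)
    (h3 : ∀ p ∈ D, lapS f f p = l3 * f p) :
    ((l1 = 0 ∧ l2 = 0 ∧ l3 = 0) ∧
        (∀ p ∈ D, pdx (pdx f) p + pdy (pdy f) p = 0)) ∨
      (¬(l1 = 0 ∧ l2 = 0 ∧ l3 = 0) ∧
        (∀ p ∈ D,
          pdx (pdx f) p + pdy (pdy f) p =
            (1 / 2) * ((l2 - l1) * (p.1 * p.2) - 2 * l3 * f p) *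
              (1 + (pdx f p + p.2 / 2) ^ 2 * (1 + u p ^ 2)) ^ 2) ∧
        (¬(∀ p ∈ D, pdx (pdx f) p + pdy (pdy f) p = 0) →
          (l2 - l1 ≠ 0 ∨ l3 ≠ 0))) := by
  have hpde := fun p (hp : p ∈ D) =>
    finite_type_pde hD (hf.of_le (WithTop.coe_le_coe.mpr le_top)) (hu.differentiableOn (by simp))
      hruled hburgers h1 h2 h3 hp
  by_cases hl : l1 = 0 ∧ l2 = 0 ∧ l3 = 0
  · obtain ⟨rfl, rfl, rfl⟩ := hl
    exact Or.inl ⟨⟨rfl, rfl, rfl⟩, fun p hp => by rw [hpde p hp]; ring⟩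
  · refine Or.inr ⟨hl, hpde, fun hnot => ?_⟩
    by_contra! hzero
    exact hnot fun p hp => by rw [hpde p hp, hzero.1, hzero.2]; ring

/-- **Theorem 3.2.1 (dichotomy for finite-type surfaces of the second family)**: under the
ruled hypothesis `Q = −uP`, `u_y + u·u_x = 0`, if `Δx = λ₁x`, `Δy = λ₂y`, `Δf = λ₃f` on `D`,
then exactly one of the following holds: either `(λ₁, λ₂, λ₃) = (0,0,0)` and `f` is harmonic
(`f_xx + f_yy = 0`, so the surface has zero mean curvature), or `(λ₁, λ₂, λ₃) ≠ (0,0,0)` and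
`f` solves `f_xx + f_yy = ½((λ₂ − λ₁)xy − 2λ₃f)(1 + (f_x + y/2)²(1 + u²))²` on `D` with
`(λ₂ − λ₁, λ₃) ≠ (0, 0)` unless `f` is harmonic. -/
theorem finite_type_S2_dichotomy
    (D : Set (ℝ × ℝ)) (hD : IsOpen D) (hDne : D.Nonempty)
    (f : ℝ × ℝ → ℝ) (hf : ContDiffOn ℝ (⊤ : ℕ∞) f D)
    (u : ℝ × ℝ → ℝ) (hu : ContDiffOn ℝ (⊤ : ℕ∞) u D)
    (hruled : ∀ p ∈ D, Qf f p = -(u p) * Pf f p)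
    (hburgers : ∀ p ∈ D, pdy u p + u p * pdx u p = 0)
    (l1 l2 l3 : ℝ)
    (h1 : ∀ p ∈ D, lapS f (fun q => q.1) p = l1 * p.1)
    (h2 : ∀ p ∈ D, lapS f (fun q => q.2) p = l2 * p.2)
    (h3 : ∀ p ∈ D, lapS f f p = l3 * f p) :
    ((l1 = 0 ∧ l2 = 0 ∧ l3 = 0) ∧
        (∀ p ∈ D, pdx (pdx f) p + pdy (pdy f) p = 0)) ∨
      (¬(l1 = 0 ∧ l2 = 0 ∧ l3 = 0) ∧
        (∀ p ∈ D,
          pdx (pdx f) p + pdy (pdy f) p =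
            (1 / 2) * ((l2 - l1) * (p.1 * p.2) - 2 * l3 * f p) *
              (1 + (pdx f p + p.2 / 2) ^ 2 * (1 + u p ^ 2)) ^ 2) ∧
        (¬(∀ p ∈ D, pdx (pdx f) p + pdy (pdy f) p = 0) →
          (l2 - l1 ≠ 0 ∨ l3 ≠ 0))) :=
  finite_type_S2_dichotomy_general D hD f hf u hu hruled hburgers l1 l2 l3 h1 h2 h3
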